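/- Probabilistic soundness theorem: if every truth valuation in C has strictly positive basic weight, then every classical propositional tautology φ satisfies μ(φ) > 0. -/

import Mathlib

/-- Propositional formulas built from atoms via ¬, ∨, →. -/
inductive Formula (A : Type) : Type
  | atom : A → Formula A
  | neg  : Formula A → Formula A
  | orr  : Formula A → Formula A → Formula A
  | imp  : Formula A → Formula A → Formula A
deriving DecidableEq

/-- Well-formed sequences over a collection `V` of truth valuations. -/
inductive WFS (V : Type) : Type
  | leaf : V → WFS V
  | pair : WFS V → WFS V → WFS V
deriving DecidableEq

/-- Association between a WFS and a formula. -/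
def Assoc {V A : Type} : WFS V → Formula A → Prop
  | WFS.leaf _, Formula.atom _ => True
  | s, Formula.neg β => Assoc s β
  | WFS.pair s₁ s₂, Formula.orr α β => Assoc s₁ α ∧ Assoc s₂ β
  | WFS.pair s₁ s₂, Formula.imp α β => Assoc s₁ α ∧ Assoc s₂ β
  | _, _ => False

/-- Justification of a formula by a WFS (PML semantics). -/
def Justif {V A : Type} (val : V → A → Bool) : WFS V → Formula A → Prop
  | WFS.leaf v, Formula.atom a => val v a = true
  | s, Formula.neg β => ¬ Justif val s β
  | WFS.pair s₁ s₂, Formula.orr α β => Justif val s₁ α ∨ Justif val s₂ β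
  | WFS.pair s₁ s₂, Formula.imp α β => ¬ Justif val s₁ α ∨ Justif val s₂ β
  | _, _ => False

/-- Multiplicative weight allotment extending a basic weight distribution. -/
def weight {V : Type} (pbar : V → ℝ) : WFS V → ℝ
  | WFS.leaf v => pbar v
  | WFS.pair s₁ s₂ => weight pbar s₁ * weight pbar s₂

/-- The (finite) set of WFS associated to a formula. -/
def assocSeqs {V A : Type} [Fintype V] [DecidableEq V] : Formula A → Finset (WFS V)
  | Formula.atom _ => Finset.univ.image WFS.leaf
  | Formula.neg β => assocSeqs β
  | Formula.orr α β => (assocSeqs α ×ˢ assocSeqs β).image fun q => WFS.pair q.1 q.2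
  | Formula.imp α β => (assocSeqs α ×ˢ assocSeqs β).image fun q => WFS.pair q.1 q.2

-- The logical measure of a formula: total weight of associated justifying sequences.
open scoped Classical in
noncomputable def mu {V A : Type} [Fintype V] [DecidableEq V]
    (pbar : V → ℝ) (val : V → A → Bool) (φ : Formula A) : ℝ :=
  ∑ s ∈ (assocSeqs φ).filter (fun s => Justif val s φ), weight pbar s

/-- Derived conjunction: α ∧ β := ¬(¬α ∨ ¬β). -/
def Formula.conj {A : Type} (α β : Formula A) : Formula A :=
  Formula.neg (Formula.orr (Formula.neg α) (Formula.neg β))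

/-- Classical Boolean semantics. -/
def evalF {A : Type} (v : A → Bool) : Formula A → Bool
  | Formula.atom a => v a
  | Formula.neg α => !(evalF v α)
  | Formula.orr α β => evalF v α || evalF v β
  | Formula.imp α β => !(evalF v α) || evalF v β

/-- Diagonal sequence: the valuation `v` at every leaf position of a formula. -/
def diag {V A : Type} (v : V) : Formula A → WFS V
  | Formula.atom _ => WFS.leaf v
  | Formula.neg α => diag v α
  | Formula.orr α β => WFS.pair (diag v α) (diag v β)
  | Formula.imp α β => WFS.pair (diag v α) (diag v β)

/-- Number of atom occurrences in a formula. -/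
def numAtoms {A : Type} : Formula A → ℕ
  | Formula.atom _ => 1
  | Formula.neg α => numAtoms α
  | Formula.orr α β => numAtoms α + numAtoms β
  | Formula.imp α β => numAtoms α + numAtoms β


/-! The diagonal sequence of a valuation `v` puts `v` at every leaf, so it is associated with `φ`,
justifies `φ` exactly when `v` satisfies `φ`, and has positive weight. For a tautology it is
therefore a justifying sequence that contributes a positive summand to `μ(φ)`. -/

theorem diag_mem_assocSeqs {V A : Type} [Fintype V] [DecidableEq V] (v : V) (φ : Formula A) :
    diag v φ ∈ (assocSeqs φ : Finset (WFS V)) := by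
  induction φ with
  | atom => simp [diag, assocSeqs]
  | neg α ih => exact ih
  | orr α β ihα ihβ | imp α β ihα ihβ =>
    exact Finset.mem_image.2 ⟨(diag v α, diag v β), Finset.mk_mem_product ihα ihβ, rfl⟩

theorem justif_diag_iff {V A : Type} (val : V → A → Bool) (v : V) (φ : Formula A) :
    Justif val (diag v φ) φ ↔ evalF (val v) φ = true := by
  induction φ with
  | atom => simp [diag, Justif, evalF]
  | neg α ih => simp [diag, Justif, evalF, ih]
  | orr α β ihα ihβ => simp [diag, Justif, evalF, ihα, ihβ]
  | imp α β ihα ihβ => simp [diag, Justif, evalF, ihα, ihβ]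

theorem weight_pos {V : Type} {pbar : V → ℝ} (hpos : ∀ v, 0 < pbar v) (s : WFS V) :
    0 < weight pbar s := by
  induction s with
  | leaf v => exact hpos v
  | pair s₁ s₂ ih₁ ih₂ => exact mul_pos ih₁ ih₂

theorem mu_pos_of_evalF {V A : Type} [Fintype V] [DecidableEq V] {pbar : V → ℝ}
    (hpos : ∀ v, 0 < pbar v) (val : V → A → Bool) {φ : Formula A} {v : V}
    (hv : evalF (val v) φ = true) : 0 < mu pbar val φ := by
  classical
  refine Finset.sum_pos (fun s _ => weight_pos hpos s) ⟨diag v φ, ?_⟩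
  exact Finset.mem_filter.2 ⟨diag_mem_assocSeqs v φ, (justif_diag_iff val v φ).2 hv⟩

theorem stmt8_general {A : Type} [Fintype A] [DecidableEq A] (pbar : (A → Bool) → ℝ)
    (hpos : ∀ v, 0 < pbar v)
    (φ : Formula A) (htaut : ∀ v : A → Bool, evalF v φ = true) :
    0 < mu pbar (fun v => v) φ :=
  mu_pos_of_evalF hpos _ (htaut fun _ => true)

/-- probabilistic soundness — every classical tautology has strictly
positive measure whenever every valuation has strictly positive basic weight. -/
theorem stmt8 {A : Type} [Fintype A] [DecidableEq A] (pbar : (A → Bool) → ℝ)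
    (hpos : ∀ v, 0 < pbar v) (hsum : ∑ v, pbar v = 1)
    (φ : Formula A) (htaut : ∀ v : A → Bool, evalF v φ = true) :
    0 < mu pbar (fun v => v) φ :=
  stmt8_general pbar hpos φ htaut
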